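/- Fix k, n, ℓ with k ≥ 2. If (I, J) and (I', J') are both pairs of k-subsets of [n] in the distinguished collection T_ℓ (types 1, 2, 3A, 3B(r), 3C(s), 3D(s)) and their associated k×2 tableaux (columns ordered by the matching field B_ℓ) are row-wise equal, then (I, J) = (I', J') up to interchanging the two columns. -/
import Mathlib


def IncSeq (k : ℕ) (a : ℕ → ℕ) : Prop := ∀ s t, 1 ≤ s → s < t → t ≤ k → a s < a t

def InRange (n k : ℕ) (a : ℕ → ℕ) : Prop := ∀ t, 1 ≤ t → t ≤ k → 1 ≤ a t ∧ a t ≤ n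

/-- The type of a k-subset with respect to B₁ = {1,...,ℓ}. -/
def typeOf (k ℓ : ℕ) (a : ℕ → ℕ) : ℕ :=
  ((Finset.Icc 1 k).filter (fun t => a t ≤ ℓ)).card

/-- The matching field ordering of a column for B_ℓ: the first two entries are
swapped exactly when the column has type 1. -/
def mfCol (k ℓ : ℕ) (a : ℕ → ℕ) : ℕ → ℕ := fun r =>
  if typeOf k ℓ a = 1 ∧ 2 ≤ k then
    (if r = 1 then a 2 else if r = 2 then a 1 else a r)
  else a r

/-- Type 1: both columns of type ≠ 1, componentwise I ≤ J. -/
def IsType1 (k ℓ : ℕ) (a b : ℕ → ℕ) : Prop :=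
  typeOf k ℓ a ≠ 1 ∧ typeOf k ℓ b ≠ 1 ∧ ∀ t, 1 ≤ t → t ≤ k → a t ≤ b t

/-- Type 2: both columns of type 1, componentwise I ≤ J. -/
def IsType2 (k ℓ : ℕ) (a b : ℕ → ℕ) : Prop :=
  typeOf k ℓ a = 1 ∧ typeOf k ℓ b = 1 ∧ ∀ t, 1 ≤ t → t ≤ k → a t ≤ b t

/-- Type 3A: i₁ ∈ B₁, all other entries in B₂, i₂ ≤ j₁, iₜ ≤ jₜ for t ≥ 3. -/
def IsType3A (k ℓ : ℕ) (a b : ℕ → ℕ) : Prop :=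
  a 1 ≤ ℓ ∧ (∀ t, 2 ≤ t → t ≤ k → ℓ < a t) ∧ (∀ t, 1 ≤ t → t ≤ k → ℓ < b t) ∧
  a 2 ≤ b 1 ∧ (∀ t, 3 ≤ t → t ≤ k → a t ≤ b t)

/-- Type 3B(r): i₁ ∈ B₁, all other entries in B₂, j₁ < j₂ ≤ i₂,
r = min{t ≥ 2 : j_{t+1} > iₜ}, iₜ > jₜ for 3 ≤ t ≤ r, iₜ ≤ jₜ for t > r. -/
def IsType3B (k ℓ r : ℕ) (a b : ℕ → ℕ) : Prop :=
  a 1 ≤ ℓ ∧ (∀ t, 2 ≤ t → t ≤ k → ℓ < a t) ∧ (∀ t, 1 ≤ t → t ≤ k → ℓ < b t) ∧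
  b 1 < b 2 ∧ b 2 ≤ a 2 ∧
  2 ≤ r ∧ r ≤ k ∧ (r = k ∨ a r < b (r + 1)) ∧
  (∀ t, 2 ≤ t → t < r → b (t + 1) ≤ a t) ∧
  (∀ t, 3 ≤ t → t ≤ r → b t < a t) ∧
  (∀ t, r < t → t ≤ k → a t ≤ b t)

/-- Type 3C(s): i₁, j₁, ..., j_s ∈ B₁, the rest in B₂, i₁ ≤ j₁ < j₂,
iₜ ≤ jₜ for t > s. -/
def IsType3C (k ℓ s : ℕ) (a b : ℕ → ℕ) : Prop :=
  a 1 ≤ ℓ ∧ (∀ t, 2 ≤ t → t ≤ k → ℓ < a t) ∧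
  2 ≤ s ∧ s ≤ k ∧ (∀ t, 1 ≤ t → t ≤ s → b t ≤ ℓ) ∧
  (∀ t, s < t → t ≤ k → ℓ < b t) ∧
  a 1 ≤ b 1 ∧ b 1 < b 2 ∧ (∀ t, s < t → t ≤ k → a t ≤ b t)

/-- Type 3D(s): i₁, j₁, ..., j_s ∈ B₁, the rest in B₂, i₁ ≥ j₂,
iₜ ≤ jₜ for t > s. -/
def IsType3D (k ℓ s : ℕ) (a b : ℕ → ℕ) : Prop :=
  a 1 ≤ ℓ ∧ (∀ t, 2 ≤ t → t ≤ k → ℓ < a t) ∧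
  2 ≤ s ∧ s ≤ k ∧ (∀ t, 1 ≤ t → t ≤ s → b t ≤ ℓ) ∧
  (∀ t, s < t → t ≤ k → ℓ < b t) ∧
  b 2 ≤ a 1 ∧ (∀ t, s < t → t ≤ k → a t ≤ b t)

/-- Membership in the distinguished collection T_ℓ. -/
def MemT (k ℓ : ℕ) (a b : ℕ → ℕ) : Prop :=
  IsType1 k ℓ a b ∨ IsType2 k ℓ a b ∨ IsType3A k ℓ a b ∨
  (∃ r, IsType3B k ℓ r a b) ∨ (∃ s, IsType3C k ℓ s a b) ∨ (∃ s, IsType3D k ℓ s a b)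

lemma typeOf_eq_of (k ℓ c : ℕ) (a : ℕ → ℕ) (hck : c ≤ k)
    (h : ∀ t, 1 ≤ t → t ≤ k → (a t ≤ ℓ ↔ t ≤ c)) : typeOf k ℓ a = c := by
  unfold typeOf
  have hfe : (Finset.Icc 1 k).filter (fun t => a t ≤ ℓ) = Finset.Icc 1 c := by
    ext x
    simp only [Finset.mem_filter, Finset.mem_Icc]
    constructor
    · rintro ⟨⟨hx1, hxk⟩, hx⟩
      exact ⟨hx1, (h x hx1 hxk).mp hx⟩
    · rintro ⟨hx1, hxc⟩
      exact ⟨⟨hx1, le_trans hxc hck⟩, (h x hx1 (le_trans hxc hck)).mpr hxc⟩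
  rw [hfe, Nat.card_Icc]
  omega

lemma le_typeOf_iff (k ℓ : ℕ) (a : ℕ → ℕ) (ha : IncSeq k a) (t : ℕ) (ht1 : 1 ≤ t) (htk : t ≤ k) :
    a t ≤ ℓ ↔ t ≤ typeOf k ℓ a := by
  constructor
  · intro h
    have hsub : Finset.Icc 1 t ⊆ (Finset.Icc 1 k).filter (fun s => a s ≤ ℓ) := by
      intro s hs
      simp only [Finset.mem_Icc] at hs
      simp only [Finset.mem_filter, Finset.mem_Icc]
      refine ⟨⟨hs.1, le_trans hs.2 htk⟩, ?_⟩
      rcases eq_or_lt_of_le hs.2 with rfl | hlt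
      · exact h
      · exact le_trans (le_of_lt (ha s t hs.1 hlt htk)) h
    have := Finset.card_le_card hsub
    rw [Nat.card_Icc] at this
    unfold typeOf
    omega
  · intro h
    by_contra hgt
    push_neg at hgt
    have hsub : (Finset.Icc 1 k).filter (fun s => a s ≤ ℓ) ⊆ Finset.Ico 1 t := by
      intro s hs
      simp only [Finset.mem_filter, Finset.mem_Icc] at hs
      simp only [Finset.mem_Ico]
      refine ⟨hs.1.1, ?_⟩
      by_contra hts
      push_neg at hts
      rcases eq_or_lt_of_le hts with rfl | hlt
      · omega
      · have := ha t s ht1 hlt hs.1.2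
        omega
    have := Finset.card_le_card hsub
    rw [Nat.card_Ico] at this
    unfold typeOf at h
    omega

lemma pair_eq {x y x' y' : ℕ} (h : ({x, y} : Multiset ℕ) = {x', y'}) :
    min x y = min x' y' ∧ max x y = max x' y' := by
  have h1 : x ∈ ({x', y'} : Multiset ℕ) := by rw [← h]; simp
  have h2 : y ∈ ({x', y'} : Multiset ℕ) := by rw [← h]; simp
  have h3 : x' ∈ ({x, y} : Multiset ℕ) := by rw [h]; simp
  have h4 : y' ∈ ({x, y} : Multiset ℕ) := by rw [h]; simp
  simp only [Multiset.insert_eq_cons, Multiset.mem_cons, Multiset.mem_singleton] at h1 h2 h3 h4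
  omega

def swapExpr (f : ℕ → ℕ) (t : ℕ) : ℕ := if t = 1 then f 2 else if t = 2 then f 1 else f t

noncomputable def bnd (k : ℕ) (m M : ℕ → ℕ) : ℕ :=
  sInf {t | 2 ≤ t ∧ (t = k ∨ (if t = 2 then M 1 else M t) < m (t + 1))}

noncomputable def Aexpr (k ℓ : ℕ) (m M : ℕ → ℕ) (t : ℕ) : ℕ :=
  if ℓ < M 1 ∧ M 2 ≤ ℓ ∧ ℓ < m 1 then swapExpr m t
  else if ℓ < M 1 ∧ M 2 ≤ ℓ ∧ m 1 ≤ ℓ then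
    if m 1 < m 2 then
      (if t = 1 then M 2 else if t = 2 then M 1 else if t ≤ typeOf k ℓ m then M t else m t)
    else
      (if t = 1 then m 2 else if t = 2 then M 1 else if t ≤ typeOf k ℓ m then M t else m t)
  else if ℓ < M 2 ∧ m 2 ≤ ℓ ∧ ℓ < m 1 then
    if M 1 < M 2 then swapExpr m t
    else (if t = 1 then m 2 else if t = 2 then M 1 else if t ≤ bnd k m M then M t else m t)
  else m t

noncomputable def Bexpr (k ℓ : ℕ) (m M : ℕ → ℕ) (t : ℕ) : ℕ :=
  if ℓ < M 1 ∧ M 2 ≤ ℓ ∧ ℓ < m 1 then swapExpr M t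
  else if ℓ < M 1 ∧ M 2 ≤ ℓ ∧ m 1 ≤ ℓ then
    if m 1 < m 2 then (if t ≤ typeOf k ℓ m then m t else M t)
    else (if t = 1 then m 1 else if t = 2 then M 2 else if t ≤ typeOf k ℓ m then m t else M t)
  else if ℓ < M 2 ∧ m 2 ≤ ℓ ∧ ℓ < m 1 then
    if M 1 < M 2 then M t
    else (if t = 1 then m 1 else if t = 2 then M 2 else if t ≤ bnd k m M then m t else M t)
  else M t

lemma bnd_eq (k r : ℕ) (m M : ℕ → ℕ) (h2 : 2 ≤ r)
    (hP : r = k ∨ (if r = 2 then M 1 else M r) < m (r + 1))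
    (hmin : ∀ t, 2 ≤ t → t < r → ¬(t = k ∨ (if t = 2 then M 1 else M t) < m (t + 1))) :
    bnd k m M = r := by
  have hrmem : r ∈ {t | 2 ≤ t ∧ (t = k ∨ (if t = 2 then M 1 else M t) < m (t + 1))} :=
    ⟨h2, hP⟩
  have h1 : bnd k m M ≤ r := Nat.sInf_le hrmem
  have hmem := Nat.sInf_mem (⟨r, hrmem⟩ :
    Set.Nonempty {t | 2 ≤ t ∧ (t = k ∨ (if t = 2 then M 1 else M t) < m (t + 1))})
  obtain ⟨hb2, hbP⟩ := hmem
  by_contra hne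
  exact hmin _ hb2 (lt_of_le_of_ne h1 hne) hbP

lemma mfCol_of_ne (k ℓ : ℕ) (a : ℕ → ℕ) (h : typeOf k ℓ a ≠ 1) :
    ∀ r, mfCol k ℓ a r = a r := fun r => by simp [mfCol, h]

lemma mfCol_of_one (k ℓ : ℕ) (a : ℕ → ℕ) (hk : 2 ≤ k) (h : typeOf k ℓ a = 1) :
    ∀ r, mfCol k ℓ a r = if r = 1 then a 2 else if r = 2 then a 1 else a r :=
  fun r => by simp [mfCol, h, hk]

lemma recon1 (k ℓ : ℕ) (hk : 2 ≤ k) (a b m M : ℕ → ℕ)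
    (ha : IncSeq k a) (hb : IncSeq k b) (h : IsType1 k ℓ a b)
    (hm : ∀ t, 1 ≤ t → t ≤ k → m t = min (mfCol k ℓ a t) (mfCol k ℓ b t)
        ∧ M t = max (mfCol k ℓ a t) (mfCol k ℓ b t)) :
    ∀ t, 1 ≤ t → t ≤ k → a t = Aexpr k ℓ m M t ∧ b t = Bexpr k ℓ m M t := by
  obtain ⟨hta, htb, hab⟩ := h
  have hA := mfCol_of_ne k ℓ a hta
  have hB := mfCol_of_ne k ℓ b htb
  have hv : ∀ t, 1 ≤ t → t ≤ k → m t = a t ∧ M t = b t := by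
    intro t h1 h2
    obtain ⟨e, f⟩ := hm t h1 h2
    rw [hA, hB] at e f
    have := hab t h1 h2
    omega
  intro t h1 h2
  obtain ⟨e1, f1⟩ := hv 1 (by omega) (by omega)
  obtain ⟨e2, f2⟩ := hv 2 (by omega) hk
  obtain ⟨et, ft⟩ := hv t h1 h2
  have ha12 : a 1 < a 2 := ha 1 2 (by omega) (by omega) hk
  have hb12 : b 1 < b 2 := hb 1 2 (by omega) (by omega) hk
  constructor
  · simp only [Aexpr, swapExpr]; split_ifs <;> omega
  · simp only [Bexpr, swapExpr]; split_ifs <;> omega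

lemma recon2 (k ℓ : ℕ) (hk : 2 ≤ k) (a b m M : ℕ → ℕ)
    (ha : IncSeq k a) (hb : IncSeq k b) (h : IsType2 k ℓ a b)
    (hm : ∀ t, 1 ≤ t → t ≤ k → m t = min (mfCol k ℓ a t) (mfCol k ℓ b t)
        ∧ M t = max (mfCol k ℓ a t) (mfCol k ℓ b t)) :
    ∀ t, 1 ≤ t → t ≤ k → a t = Aexpr k ℓ m M t ∧ b t = Bexpr k ℓ m M t := by
  obtain ⟨hta, htb, hab⟩ := h
  have ha1 : a 1 ≤ ℓ := (le_typeOf_iff k ℓ a ha 1 (by omega) (by omega)).mpr (by omega)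
  have ha2 : ℓ < a 2 := by
    have h2 := le_typeOf_iff k ℓ a ha 2 (by omega) hk
    rw [hta] at h2; omega
  have hb1 : b 1 ≤ ℓ := (le_typeOf_iff k ℓ b hb 1 (by omega) (by omega)).mpr (by omega)
  have hb2 : ℓ < b 2 := by
    have h2 := le_typeOf_iff k ℓ b hb 2 (by omega) hk
    rw [htb] at h2; omega
  have hA := mfCol_of_one k ℓ a hk hta
  have hB := mfCol_of_one k ℓ b hk htb
  have hab1 := hab 1 (by omega) (by omega)
  have hab2 := hab 2 (by omega) hk
  obtain ⟨e1, f1⟩ := hm 1 (by omega) (by omega)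
  obtain ⟨e2, f2⟩ := hm 2 (by omega) hk
  simp only [hA, hB] at e1 f1 e2 f2
  norm_num at e1 f1 e2 f2
  -- e1 : m 1 = min (a 2) (b 2), f1 : M 1 = max (a 2) (b 2)
  -- e2 : m 2 = min (a 1) (b 1), f2 : M 2 = max (a 1) (b 1)
  intro t h1 h2
  rcases eq_or_ne t 1 with rfl | ht1
  · refine ⟨?_, ?_⟩ <;> (simp only [Aexpr, Bexpr, swapExpr]; split_ifs <;> omega)
  rcases eq_or_ne t 2 with rfl | ht2
  · refine ⟨?_, ?_⟩ <;> (simp only [Aexpr, Bexpr, swapExpr]; split_ifs <;> omega)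
  have habt := hab t h1 h2
  obtain ⟨et, ft⟩ := hm t h1 h2
  simp only [hA, hB, if_neg ht1, if_neg ht2] at et ft
  refine ⟨?_, ?_⟩ <;> (simp only [Aexpr, Bexpr, swapExpr]; split_ifs <;> omega)

lemma typeOf_one (k ℓ : ℕ) (a : ℕ → ℕ) (h1 : a 1 ≤ ℓ)
    (h2 : ∀ t, 2 ≤ t → t ≤ k → ℓ < a t) (hk : 1 ≤ k) : typeOf k ℓ a = 1 := by
  apply typeOf_eq_of k ℓ 1 a hk
  intro t ht1 htk
  rcases eq_or_ne t 1 with rfl | hne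
  · simp [h1]
  · have := h2 t (by omega) htk
    omega

lemma recon3A (k ℓ : ℕ) (hk : 2 ≤ k) (a b m M : ℕ → ℕ)
    (ha : IncSeq k a) (hb : IncSeq k b) (h : IsType3A k ℓ a b)
    (hm : ∀ t, 1 ≤ t → t ≤ k → m t = min (mfCol k ℓ a t) (mfCol k ℓ b t)
        ∧ M t = max (mfCol k ℓ a t) (mfCol k ℓ b t)) :
    ∀ t, 1 ≤ t → t ≤ k → a t = Aexpr k ℓ m M t ∧ b t = Bexpr k ℓ m M t := by
  obtain ⟨ha1, ha2, hb3, h21, h3t⟩ := h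
  have hta : typeOf k ℓ a = 1 := typeOf_one k ℓ a ha1 ha2 (by omega)
  have htb : typeOf k ℓ b = 0 := by
    apply typeOf_eq_of k ℓ 0 b (by omega)
    intro t ht1 htk
    have := hb3 t ht1 htk
    omega
  have hA := mfCol_of_one k ℓ a hk hta
  have hB := mfCol_of_ne k ℓ b (by omega)
  have hb12 : b 1 < b 2 := hb 1 2 (by omega) (by omega) hk
  have ha22 : ℓ < a 2 := ha2 2 (by omega) hk
  have hb31 := hb3 1 (by omega) (by omega)
  have hb32 := hb3 2 (by omega) hk
  obtain ⟨e1, f1⟩ := hm 1 (by omega) (by omega)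
  obtain ⟨e2, f2⟩ := hm 2 (by omega) hk
  simp only [hA, hB] at e1 f1 e2 f2
  norm_num at e1 f1 e2 f2
  -- e1 : m 1 = min (a 2) (b 1), f1 : M 1 = max (a 2) (b 1)
  -- e2 : m 2 = min (a 1) (b 2), f2 : M 2 = max (a 1) (b 2)
  intro t h1 h2
  rcases eq_or_ne t 1 with rfl | ht1
  · refine ⟨?_, ?_⟩ <;> (simp only [Aexpr, Bexpr, swapExpr]; split_ifs <;> omega)
  rcases eq_or_ne t 2 with rfl | ht2
  · refine ⟨?_, ?_⟩ <;> (simp only [Aexpr, Bexpr, swapExpr]; split_ifs <;> omega)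
  have habt := h3t t (by omega) h2
  obtain ⟨et, ft⟩ := hm t h1 h2
  simp only [hA, hB, if_neg ht1, if_neg ht2] at et ft
  refine ⟨?_, ?_⟩ <;> (simp only [Aexpr, Bexpr, swapExpr]; split_ifs <;> omega)

set_option maxHeartbeats 1000000 in
lemma recon3B (k ℓ r : ℕ) (hk : 2 ≤ k) (a b m M : ℕ → ℕ)
    (ha : IncSeq k a) (hb : IncSeq k b) (h : IsType3B k ℓ r a b)
    (hm : ∀ t, 1 ≤ t → t ≤ k → m t = min (mfCol k ℓ a t) (mfCol k ℓ b t)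
        ∧ M t = max (mfCol k ℓ a t) (mfCol k ℓ b t)) :
    ∀ t, 1 ≤ t → t ≤ k → a t = Aexpr k ℓ m M t ∧ b t = Bexpr k ℓ m M t := by
  obtain ⟨ha1, ha2, hb3, hb12, hb2a2, hr2, hrk, hrP, hrb, hba, hab⟩ := h
  have hta : typeOf k ℓ a = 1 := typeOf_one k ℓ a ha1 ha2 (by omega)
  have htb : typeOf k ℓ b = 0 := by
    apply typeOf_eq_of k ℓ 0 b (by omega)
    intro t ht1 htk
    have := hb3 t ht1 htk
    omega
  have hA := mfCol_of_one k ℓ a hk hta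
  have hB := mfCol_of_ne k ℓ b (by omega)
  have ha22 : ℓ < a 2 := ha2 2 (by omega) hk
  have hb31 := hb3 1 (by omega) (by omega)
  have hb32 := hb3 2 (by omega) hk
  obtain ⟨e1, f1⟩ := hm 1 (by omega) (by omega)
  obtain ⟨e2, f2⟩ := hm 2 (by omega) hk
  simp only [hA, hB] at e1 f1 e2 f2
  norm_num at e1 f1 e2 f2
  -- e1 : m 1 = min (a 2) (b 1), f1 : M 1 = max (a 2) (b 1)
  -- e2 : m 2 = min (a 1) (b 2), f2 : M 2 = max (a 1) (b 2)
  -- rows 3..r : m = b, M = a ; rows > r : m = a, M = b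
  have hMr : ∀ x, 3 ≤ x → x ≤ r → M x = a x ∧ m x = b x := by
    intro x hx3 hxr
    obtain ⟨e, f⟩ := hm x (by omega) (by omega)
    simp only [hA, hB, if_neg (by omega : x ≠ 1), if_neg (by omega : x ≠ 2)] at e f
    have := hba x hx3 hxr
    omega
  have hmx : ∀ x, r < x → x ≤ k → m x = a x ∧ M x = b x := by
    intro x hrx hxk
    obtain ⟨e, f⟩ := hm x (by omega) hxk
    simp only [hA, hB, if_neg (by omega : x ≠ 1), if_neg (by omega : x ≠ 2)] at e f
    have := hab x hrx hxk
    omega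
  have hbnd : bnd k m M = r := by
    apply bnd_eq k r m M hr2
    · rcases eq_or_ne r k with rfl | hne
      · exact Or.inl rfl
      right
      obtain ⟨er1, _⟩ := hmx (r + 1) (by omega) (by omega)
      have harr : a r < a (r + 1) := ha r (r + 1) (by omega) (by omega) (by omega)
      rcases eq_or_ne r 2 with hr2' | hr2'
      · subst hr2'
        norm_num at er1 harr ⊢
        omega
      · rw [if_neg hr2']
        obtain ⟨fMr, _⟩ := hMr r (by omega) le_rfl
        omega
    · intro x hx2 hxr
      have hxk : x < k := by omega
      have hmx1 : m (x + 1) = b (x + 1) := (hMr (x + 1) (by omega) (by omega)).2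
      have hbax := hrb x hx2 hxr
      rcases eq_or_ne x 2 with hx2' | hx2'
      · subst hx2'
        norm_num at hbax hmx1 ⊢
        omega
      · rw [if_neg hx2']
        obtain ⟨fMx, _⟩ := hMr x (by omega) (by omega)
        omega
  intro t h1 h2
  rcases eq_or_ne t 1 with rfl | ht1
  · refine ⟨?_, ?_⟩ <;> (simp only [Aexpr, Bexpr, swapExpr, hbnd]; split_ifs <;> omega)
  rcases eq_or_ne t 2 with rfl | ht2
  · refine ⟨?_, ?_⟩ <;> (simp only [Aexpr, Bexpr, swapExpr, hbnd]; split_ifs <;> omega)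
  rcases le_or_gt t r with htr | htr
  · obtain ⟨ft, et⟩ := hMr t (by omega) htr
    refine ⟨?_, ?_⟩ <;> (simp only [Aexpr, Bexpr, swapExpr, hbnd]; split_ifs <;> omega)
  · obtain ⟨et, ft⟩ := hmx t htr h2
    refine ⟨?_, ?_⟩ <;> (simp only [Aexpr, Bexpr, swapExpr, hbnd]; split_ifs <;> omega)

set_option maxHeartbeats 1000000 in
lemma recon3C (k ℓ s : ℕ) (hk : 2 ≤ k) (a b m M : ℕ → ℕ)
    (ha : IncSeq k a) (hb : IncSeq k b) (h : IsType3C k ℓ s a b)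
    (hm : ∀ t, 1 ≤ t → t ≤ k → m t = min (mfCol k ℓ a t) (mfCol k ℓ b t)
        ∧ M t = max (mfCol k ℓ a t) (mfCol k ℓ b t)) :
    ∀ t, 1 ≤ t → t ≤ k → a t = Aexpr k ℓ m M t ∧ b t = Bexpr k ℓ m M t := by
  obtain ⟨ha1, ha2, hs2, hsk, hbs, hbL, hab1, hb12, hab⟩ := h
  have hta : typeOf k ℓ a = 1 := typeOf_one k ℓ a ha1 ha2 (by omega)
  have htb : typeOf k ℓ b = s := by
    apply typeOf_eq_of k ℓ s b hsk
    intro t ht1 htk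
    rcases le_or_gt t s with hts | hts
    · have := hbs t ht1 hts; omega
    · have := hbL t hts htk; omega
  have hA := mfCol_of_one k ℓ a hk hta
  have hB := mfCol_of_ne k ℓ b (by omega)
  have ha22 : ℓ < a 2 := ha2 2 (by omega) hk
  have hbs1 := hbs 1 (by omega) (by omega)
  have hbs2 := hbs 2 (by omega) (by omega)
  obtain ⟨e1, f1⟩ := hm 1 (by omega) (by omega)
  obtain ⟨e2, f2⟩ := hm 2 (by omega) hk
  simp only [hA, hB] at e1 f1 e2 f2
  norm_num at e1 f1 e2 f2
  have hMr : ∀ x, 3 ≤ x → x ≤ s → M x = a x ∧ m x = b x := by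
    intro x hx3 hxs
    obtain ⟨e, f⟩ := hm x (by omega) (by omega)
    simp only [hA, hB, if_neg (by omega : x ≠ 1), if_neg (by omega : x ≠ 2)] at e f
    have h1 := hbs x (by omega) hxs
    have h2 := ha2 x (by omega) (by omega)
    omega
  have hmx : ∀ x, s < x → x ≤ k → m x = a x ∧ M x = b x := by
    intro x hsx hxk
    obtain ⟨e, f⟩ := hm x (by omega) hxk
    simp only [hA, hB, if_neg (by omega : x ≠ 1), if_neg (by omega : x ≠ 2)] at e f
    have := hab x hsx hxk
    omega
  have htm : typeOf k ℓ m = s := by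
    apply typeOf_eq_of k ℓ s m hsk
    intro x hx1 hxk
    rcases eq_or_ne x 1 with rfl | hx1'
    · omega
    rcases eq_or_ne x 2 with rfl | hx2'
    · omega
    rcases le_or_gt x s with hxs | hxs
    · obtain ⟨_, e⟩ := hMr x (by omega) hxs
      have := hbs x (by omega) hxs
      omega
    · obtain ⟨e, _⟩ := hmx x hxs hxk
      have := ha2 x (by omega) hxk
      omega
  intro t h1 h2
  rcases eq_or_ne t 1 with rfl | ht1
  · refine ⟨?_, ?_⟩ <;> (simp only [Aexpr, Bexpr, swapExpr, htm]; split_ifs <;> omega)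
  rcases eq_or_ne t 2 with rfl | ht2
  · refine ⟨?_, ?_⟩ <;> (simp only [Aexpr, Bexpr, swapExpr, htm]; split_ifs <;> omega)
  rcases le_or_gt t s with hts | hts
  · obtain ⟨ft, et⟩ := hMr t (by omega) hts
    refine ⟨?_, ?_⟩ <;> (simp only [Aexpr, Bexpr, swapExpr, htm]; split_ifs <;> omega)
  · obtain ⟨et, ft⟩ := hmx t hts h2
    refine ⟨?_, ?_⟩ <;> (simp only [Aexpr, Bexpr, swapExpr, htm]; split_ifs <;> omega)

set_option maxHeartbeats 1000000 in
lemma recon3D (k ℓ s : ℕ) (hk : 2 ≤ k) (a b m M : ℕ → ℕ)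
    (ha : IncSeq k a) (hb : IncSeq k b) (h : IsType3D k ℓ s a b)
    (hm : ∀ t, 1 ≤ t → t ≤ k → m t = min (mfCol k ℓ a t) (mfCol k ℓ b t)
        ∧ M t = max (mfCol k ℓ a t) (mfCol k ℓ b t)) :
    ∀ t, 1 ≤ t → t ≤ k → a t = Aexpr k ℓ m M t ∧ b t = Bexpr k ℓ m M t := by
  obtain ⟨ha1, ha2, hs2, hsk, hbs, hbL, hb2a1, hab⟩ := h
  have hta : typeOf k ℓ a = 1 := typeOf_one k ℓ a ha1 ha2 (by omega)
  have htb : typeOf k ℓ b = s := by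
    apply typeOf_eq_of k ℓ s b hsk
    intro t ht1 htk
    rcases le_or_gt t s with hts | hts
    · have := hbs t ht1 hts; omega
    · have := hbL t hts htk; omega
  have hA := mfCol_of_one k ℓ a hk hta
  have hB := mfCol_of_ne k ℓ b (by omega)
  have ha22 : ℓ < a 2 := ha2 2 (by omega) hk
  have hbs1 := hbs 1 (by omega) (by omega)
  have hbs2 := hbs 2 (by omega) (by omega)
  have hb12 : b 1 < b 2 := hb 1 2 (by omega) (by omega) hk
  obtain ⟨e1, f1⟩ := hm 1 (by omega) (by omega)
  obtain ⟨e2, f2⟩ := hm 2 (by omega) hk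
  simp only [hA, hB] at e1 f1 e2 f2
  norm_num at e1 f1 e2 f2
  have hMr : ∀ x, 3 ≤ x → x ≤ s → M x = a x ∧ m x = b x := by
    intro x hx3 hxs
    obtain ⟨e, f⟩ := hm x (by omega) (by omega)
    simp only [hA, hB, if_neg (by omega : x ≠ 1), if_neg (by omega : x ≠ 2)] at e f
    have h1 := hbs x (by omega) hxs
    have h2 := ha2 x (by omega) (by omega)
    omega
  have hmx : ∀ x, s < x → x ≤ k → m x = a x ∧ M x = b x := by
    intro x hsx hxk
    obtain ⟨e, f⟩ := hm x (by omega) hxk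
    simp only [hA, hB, if_neg (by omega : x ≠ 1), if_neg (by omega : x ≠ 2)] at e f
    have := hab x hsx hxk
    omega
  have htm : typeOf k ℓ m = s := by
    apply typeOf_eq_of k ℓ s m hsk
    intro x hx1 hxk
    rcases eq_or_ne x 1 with rfl | hx1'
    · omega
    rcases eq_or_ne x 2 with rfl | hx2'
    · omega
    rcases le_or_gt x s with hxs | hxs
    · obtain ⟨_, e⟩ := hMr x (by omega) hxs
      have := hbs x (by omega) hxs
      omega
    · obtain ⟨e, _⟩ := hmx x hxs hxk
      have := ha2 x (by omega) hxk
      omega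
  intro t h1 h2
  rcases eq_or_ne t 1 with rfl | ht1
  · refine ⟨?_, ?_⟩ <;> (simp only [Aexpr, Bexpr, swapExpr, htm]; split_ifs <;> omega)
  rcases eq_or_ne t 2 with rfl | ht2
  · refine ⟨?_, ?_⟩ <;> (simp only [Aexpr, Bexpr, swapExpr, htm]; split_ifs <;> omega)
  rcases le_or_gt t s with hts | hts
  · obtain ⟨ft, et⟩ := hMr t (by omega) hts
    refine ⟨?_, ?_⟩ <;> (simp only [Aexpr, Bexpr, swapExpr, htm]; split_ifs <;> omega)
  · obtain ⟨et, ft⟩ := hmx t hts h2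
    refine ⟨?_, ?_⟩ <;> (simp only [Aexpr, Bexpr, swapExpr, htm]; split_ifs <;> omega)

lemma recon (k ℓ : ℕ) (hk : 2 ≤ k) (a b m M : ℕ → ℕ)
    (ha : IncSeq k a) (hb : IncSeq k b) (hT : MemT k ℓ a b)
    (hm : ∀ t, 1 ≤ t → t ≤ k → m t = min (mfCol k ℓ a t) (mfCol k ℓ b t)
        ∧ M t = max (mfCol k ℓ a t) (mfCol k ℓ b t)) :
    ∀ t, 1 ≤ t → t ≤ k → a t = Aexpr k ℓ m M t ∧ b t = Bexpr k ℓ m M t := by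
  rcases hT with h | h | h | ⟨r, h⟩ | ⟨s, h⟩ | ⟨s, h⟩
  · exact recon1 k ℓ hk a b m M ha hb h hm
  · exact recon2 k ℓ hk a b m M ha hb h hm
  · exact recon3A k ℓ hk a b m M ha hb h hm
  · exact recon3B k ℓ r hk a b m M ha hb h hm
  · exact recon3C k ℓ s hk a b m M ha hb h hm
  · exact recon3D k ℓ s hk a b m M ha hb h hm

/-- two pairs in the distinguished collection T_ℓ whose
matching-field tableaux are row-wise equal are equal up to interchanging
the two columns. -/
theorem stmt14 (n k ℓ : ℕ) (hk : 2 ≤ k) (hℓ : ℓ ≤ n) (a b a' b' : ℕ → ℕ)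
    (ha : IncSeq k a) (ha2 : InRange n k a)
    (hb : IncSeq k b) (hb2 : InRange n k b)
    (ha' : IncSeq k a') (ha'2 : InRange n k a')
    (hb' : IncSeq k b') (hb'2 : InRange n k b')
    (hT : MemT k ℓ a b) (hT' : MemT k ℓ a' b')
    (hrow : ∀ r, 1 ≤ r → r ≤ k →
      ({mfCol k ℓ a r, mfCol k ℓ b r} : Multiset ℕ) =
      ({mfCol k ℓ a' r, mfCol k ℓ b' r} : Multiset ℕ)) :
    (∀ t, 1 ≤ t → t ≤ k → a t = a' t ∧ b t = b' t) ∨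
    (∀ t, 1 ≤ t → t ≤ k → a t = b' t ∧ b t = a' t) := by
  set m : ℕ → ℕ := fun t => min (mfCol k ℓ a t) (mfCol k ℓ b t) with hmdef
  set M : ℕ → ℕ := fun t => max (mfCol k ℓ a t) (mfCol k ℓ b t) with hMdef
  have hm : ∀ t, 1 ≤ t → t ≤ k → m t = min (mfCol k ℓ a t) (mfCol k ℓ b t)
      ∧ M t = max (mfCol k ℓ a t) (mfCol k ℓ b t) := fun t _ _ => ⟨rfl, rfl⟩
  have hm' : ∀ t, 1 ≤ t → t ≤ k → m t = min (mfCol k ℓ a' t) (mfCol k ℓ b' t)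
      ∧ M t = max (mfCol k ℓ a' t) (mfCol k ℓ b' t) := by
    intro t h1 h2
    obtain ⟨hmin, hmax⟩ := pair_eq (hrow t h1 h2)
    exact ⟨hmin, hmax⟩
  have key := recon k ℓ hk a b m M ha hb hT hm
  have key' := recon k ℓ hk a' b' m M ha' hb' hT' hm'
  left
  intro t h1 h2
  obtain ⟨u1, u2⟩ := key t h1 h2
  obtain ⟨v1, v2⟩ := key' t h1 h2
  exact ⟨u1.trans v1.symm, u2.trans v2.symm⟩
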